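/- Let (A[[ν]],⋆) be a formal deformation of A. Then the bracket {·,·}_1 restricted to the center satisfies the Jacobi identity: for all a, b, c ∈ Z(A), {{a,b}_1, c}_1 + {{b,c}_1, a}_1 + {{c,a}_1, b}_1 = 0. (This is well defined since {a,b}_1 ∈ Z(A) for a, b ∈ Z(A).) Thus (Z(A), {·,·}_1) is a commutative Poisson algebra, the reduced Poisson algebra of the deformation. -/

import Mathlib

open PowerSeries

/-- A formal deformation `(A⟦ν⟧, ⋆)` of an associative unital `R`-algebra `A`:
an `R⟦ν⟧`-bilinear, associative, unital (with unit the constant series `1`)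
multiplication `⋆` on the `R⟦ν⟧`-module `A⟦ν⟧`, such that `a ⋆ b ≡ a * b (mod ν·A⟦ν⟧)`
for all `a, b : A` (viewed as constant power series).  The `R⟦ν⟧`-module structure on
`A⟦ν⟧` is given by `c • P = (map (algebraMap R A) c) * P`. -/
structure FormalDeformation (R A : Type*) [CommRing R] [Ring A] [Algebra R A] where
  star : PowerSeries A → PowerSeries A → PowerSeries A
  add_star : ∀ P Q S, star (P + Q) S = star P S + star Q S
  star_add : ∀ P Q S, star P (Q + S) = star P Q + star P S
  smul_star : ∀ (c : PowerSeries R) (P Q : PowerSeries A),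
      star (PowerSeries.map (algebraMap R A) c * P) Q
        = PowerSeries.map (algebraMap R A) c * star P Q
  star_smul : ∀ (c : PowerSeries R) (P Q : PowerSeries A),
      star P (PowerSeries.map (algebraMap R A) c * Q)
        = PowerSeries.map (algebraMap R A) c * star P Q
  star_assoc : ∀ P Q S, star (star P Q) S = star P (star Q S)
  one_star : ∀ P, star 1 P = P
  star_one : ∀ P, star P 1 = P
  star_deform : ∀ a b : A,
      constantCoeff (star (C a) (C b)) = a * b

namespace FormalDeformation

variable {R A : Type*} [CommRing R] [Ring A] [Algebra R A]

/-- `(a,b)ᵢ` : the coefficient of `νⁱ` in `a ⋆ b`, for `a b : A`. -/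
noncomputable def prodCoeff (D : FormalDeformation R A) (i : ℕ) (a b : A) : A :=
  coeff i (D.star (C a) (C b))

/-- `{a,b}ᵢ` : the coefficient of `νⁱ` in `a ⋆ b − b ⋆ a`, for `a b : A`. -/
noncomputable def brkt (D : FormalDeformation R A) (i : ℕ) (a b : A) : A :=
  coeff i (D.star (C a) (C b) - D.star (C b) (C a))

end FormalDeformation

/-- `H_ν = Z(A) + ν·A⟦ν⟧` : the power series whose constant term is central in `A`. -/
def Hnu (A : Type*) [Ring A] : Set (PowerSeries A) :=
  {P | constantCoeff P ∈ Set.center A}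

/-!
The `⋆`-commutator `[P, Q] = P ⋆ Q - Q ⋆ P` satisfies the Jacobi identity and is a derivation of
`⋆`, by associativity and biadditivity alone. Its constant term is the commutator in `A`, so
`[a, P]` is divisible by `ν` whenever `a` is central, and its `ν`-coefficient is `{a, P₀}₁`.
Taking the `ν`-coefficient of the Jacobi identity for `a, b, x` shows that `{a, b}₁` commutes
with every `x`; the `ν`-coefficient of the derivation rule gives the Leibniz identity; and the
`ν²`-coefficient of the Jacobi identity for central `a, b, c` is the Jacobi identity for `{·,·}₁`.
-/

namespace FormalDeformation

variable {R A : Type*} [CommRing R] [Ring A] [Algebra R A] (D : FormalDeformation R A)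

lemma star_sub (P Q S : PowerSeries A) : D.star P (Q - S) = D.star P Q - D.star P S :=
  eq_sub_of_add_eq (by rw [← D.star_add, sub_add_cancel])

lemma sub_star (P Q S : PowerSeries A) : D.star (P - Q) S = D.star P S - D.star Q S :=
  eq_sub_of_add_eq (by rw [← D.add_star, sub_add_cancel])

lemma star_X_mul (P Q : PowerSeries A) : D.star (X * P) Q = X * D.star P Q := by
  simpa only [map_X] using D.smul_star X P Q

lemma star_mul_X (P Q : PowerSeries A) : D.star P (X * Q) = X * D.star P Q := by
  simpa only [map_X] using D.star_smul X P Q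

lemma constantCoeff_star (P Q : PowerSeries A) :
    constantCoeff (D.star P Q) = constantCoeff P * constantCoeff Q := by
  conv_lhs => rw [P.eq_X_mul_shift_add_const, Q.eq_X_mul_shift_add_const]
  simp only [D.add_star, D.star_add, D.star_X_mul, D.star_mul_X, map_add, map_mul,
    constantCoeff_X, zero_mul, D.star_deform, zero_add]

lemma coeff_one_star_of_constantCoeff_left_eq_zero {P : PowerSeries A}
    (hP : constantCoeff P = 0) (Q : PowerSeries A) :
    coeff 1 (D.star P Q) = coeff 1 P * constantCoeff Q := by
  obtain ⟨S, rfl⟩ := X_dvd_iff.mpr hP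
  rw [D.star_X_mul, coeff_succ_X_mul, coeff_succ_X_mul, coeff_zero_eq_constantCoeff_apply,
    coeff_zero_eq_constantCoeff_apply, D.constantCoeff_star]

lemma coeff_one_star_of_constantCoeff_right_eq_zero {Q : PowerSeries A}
    (hQ : constantCoeff Q = 0) (P : PowerSeries A) :
    coeff 1 (D.star P Q) = constantCoeff P * coeff 1 Q := by
  obtain ⟨S, rfl⟩ := X_dvd_iff.mpr hQ
  rw [D.star_mul_X, coeff_succ_X_mul, coeff_succ_X_mul, coeff_zero_eq_constantCoeff_apply,
    coeff_zero_eq_constantCoeff_apply, D.constantCoeff_star]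

noncomputable def comm (P Q : PowerSeries A) : PowerSeries A :=
  D.star P Q - D.star Q P

lemma coeff_comm_C_C (i : ℕ) (a b : A) : coeff i (D.comm (C a) (C b)) = D.brkt i a b := rfl

lemma brkt_skew (i : ℕ) (a b : A) : D.brkt i a b = -D.brkt i b a := by
  rw [brkt, brkt, ← map_neg, neg_sub]

lemma comm_X_mul (P Q : PowerSeries A) : D.comm (X * P) Q = X * D.comm P Q := by
  simp only [comm, D.star_X_mul, D.star_mul_X, mul_sub]

lemma comm_jacobi (P Q S : PowerSeries A) :
    D.comm (D.comm P Q) S + D.comm (D.comm Q S) P + D.comm (D.comm S P) Q = 0 := by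
  simp only [comm, D.sub_star, D.star_sub, D.star_assoc]
  abel

lemma comm_star (P Q S : PowerSeries A) :
    D.comm P (D.star Q S) = D.star (D.comm P Q) S + D.star Q (D.comm P S) := by
  simp only [comm, D.sub_star, D.star_sub, D.star_assoc]
  abel

lemma constantCoeff_comm (P Q : PowerSeries A) :
    constantCoeff (D.comm P Q) =
      constantCoeff P * constantCoeff Q - constantCoeff Q * constantCoeff P := by
  rw [comm, map_sub, D.constantCoeff_star, D.constantCoeff_star]

lemma constantCoeff_comm_C_left {a : A} (ha : a ∈ Set.center A) (P : PowerSeries A) :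
    constantCoeff (D.comm (C a) P) = 0 := by
  rw [D.constantCoeff_comm, constantCoeff_C, (ha.comm _).eq, sub_self]

lemma constantCoeff_comm_C_right {a : A} (ha : a ∈ Set.center A) (P : PowerSeries A) :
    constantCoeff (D.comm P (C a)) = 0 := by
  rw [D.constantCoeff_comm, constantCoeff_C, (ha.comm _).eq, sub_self]

lemma coeff_one_comm_of_constantCoeff_eq_zero {P : PowerSeries A}
    (hP : constantCoeff P = 0) (Q : PowerSeries A) :
    coeff 1 (D.comm P Q) = coeff 1 P * constantCoeff Q - constantCoeff Q * coeff 1 P := by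
  rw [comm, map_sub, D.coeff_one_star_of_constantCoeff_left_eq_zero hP,
    D.coeff_one_star_of_constantCoeff_right_eq_zero hP]

lemma coeff_one_comm_C_right {c : A} (hc : c ∈ Set.center A) (S : PowerSeries A) :
    coeff 1 (D.comm S (C c)) = D.brkt 1 (constantCoeff S) c := by
  conv_lhs => rw [S.eq_X_mul_shift_add_const]
  have hsplit : ∀ P Q : PowerSeries A, D.comm (P + Q) (C c) = D.comm P (C c) + D.comm Q (C c) :=
    fun P Q => by simp only [comm, D.add_star, D.star_add]; abel
  rw [hsplit, D.comm_X_mul, map_add, coeff_succ_X_mul, coeff_zero_eq_constantCoeff_apply,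
    D.constantCoeff_comm_C_right hc, zero_add, coeff_comm_C_C]

lemma coeff_one_comm_C_left {a : A} (ha : a ∈ Set.center A) (S : PowerSeries A) :
    coeff 1 (D.comm (C a) S) = D.brkt 1 a (constantCoeff S) := by
  have hskew : ∀ P Q : PowerSeries A, D.comm P Q = -D.comm Q P := fun P Q => (neg_sub _ _).symm
  rw [hskew, map_neg, D.coeff_one_comm_C_right ha, ← D.brkt_skew]

lemma coeff_two_comm_C_of_constantCoeff_eq_zero {P : PowerSeries A} (hP : constantCoeff P = 0)
    {c : A} (hc : c ∈ Set.center A) :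
    coeff 2 (D.comm P (C c)) = D.brkt 1 (coeff 1 P) c := by
  obtain ⟨S, rfl⟩ := X_dvd_iff.mpr hP
  rw [D.comm_X_mul, coeff_succ_X_mul, D.coeff_one_comm_C_right hc, coeff_succ_X_mul,
    coeff_zero_eq_constantCoeff_apply]

lemma brkt_mem_center {a b : A} (ha : a ∈ Set.center A) (hb : b ∈ Set.center A) :
    D.brkt 1 a b ∈ Set.center A := by
  refine Semigroup.mem_center_iff.mpr fun x => ?_
  have hJ := congrArg (coeff 1) (D.comm_jacobi (C a) (C b) (C x))
  simp only [map_add, map_zero, constantCoeff_C,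
    D.coeff_one_comm_of_constantCoeff_eq_zero (D.constantCoeff_comm_C_left ha _),
    D.coeff_one_comm_of_constantCoeff_eq_zero (D.constantCoeff_comm_C_left hb _),
    D.coeff_one_comm_of_constantCoeff_eq_zero (D.constantCoeff_comm_C_right ha _),
    (ha.comm _).eq, (hb.comm _).eq, sub_self, add_zero, coeff_comm_C_C] at hJ
  exact (sub_eq_zero.mp hJ).symm

lemma brkt_mul {a : A} (ha : a ∈ Set.center A) (b c : A) :
    D.brkt 1 a (b * c) = b * D.brkt 1 a c + D.brkt 1 a b * c := by
  calc D.brkt 1 a (b * c)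
      = coeff 1 (D.comm (C a) (D.star (C b) (C c))) := by
        rw [D.coeff_one_comm_C_left ha, D.constantCoeff_star, constantCoeff_C, constantCoeff_C]
    _ = D.brkt 1 a b * c + b * D.brkt 1 a c := by
        rw [D.comm_star, map_add,
          D.coeff_one_star_of_constantCoeff_left_eq_zero (D.constantCoeff_comm_C_left ha _),
          D.coeff_one_star_of_constantCoeff_right_eq_zero (D.constantCoeff_comm_C_left ha _),
          constantCoeff_C, constantCoeff_C, coeff_comm_C_C, coeff_comm_C_C]
    _ = b * D.brkt 1 a c + D.brkt 1 a b * c := add_comm _ _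

lemma brkt_jacobi {a b c : A} (ha : a ∈ Set.center A) (hb : b ∈ Set.center A)
    (hc : c ∈ Set.center A) :
    D.brkt 1 (D.brkt 1 a b) c + D.brkt 1 (D.brkt 1 b c) a + D.brkt 1 (D.brkt 1 c a) b = 0 := by
  have hJ := congrArg (coeff 2) (D.comm_jacobi (C a) (C b) (C c))
  rwa [map_add, map_add, map_zero,
    D.coeff_two_comm_C_of_constantCoeff_eq_zero (D.constantCoeff_comm_C_left ha _) hc,
    D.coeff_two_comm_C_of_constantCoeff_eq_zero (D.constantCoeff_comm_C_left hb _) ha,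
    D.coeff_two_comm_C_of_constantCoeff_eq_zero (D.constantCoeff_comm_C_left hc _) hb,
    coeff_comm_C_C, coeff_comm_C_C, coeff_comm_C_C] at hJ

end FormalDeformation

/-- the bracket `{·,·}₁` restricted to `Z(A)` makes `Z(A)` a commutative
Poisson algebra (the reduced Poisson algebra): it takes values in `Z(A)`, is
skew-symmetric, satisfies the Leibniz identity and the Jacobi identity on `Z(A)`. -/
theorem reduced_poisson_algebra {R A : Type*} [CommRing R] [Ring A] [Algebra R A]
    (D : FormalDeformation R A) :
    (∀ a b : A, a ∈ Set.center A → b ∈ Set.center A → D.brkt 1 a b ∈ Set.center A) ∧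
    (∀ a b : A, a ∈ Set.center A → b ∈ Set.center A → D.brkt 1 a b = -D.brkt 1 b a) ∧
    (∀ a b c : A, a ∈ Set.center A → b ∈ Set.center A → c ∈ Set.center A →
      D.brkt 1 a (b * c) = b * D.brkt 1 a c + D.brkt 1 a b * c) ∧
    (∀ a b c : A, a ∈ Set.center A → b ∈ Set.center A → c ∈ Set.center A →
      D.brkt 1 (D.brkt 1 a b) c + D.brkt 1 (D.brkt 1 b c) a
        + D.brkt 1 (D.brkt 1 c a) b = 0) :=
  ⟨fun _ _ ha hb => D.brkt_mem_center ha hb, fun a b _ _ => D.brkt_skew 1 a b,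
    fun _ b c ha _ _ => D.brkt_mul ha b c, fun _ _ _ ha hb hc => D.brkt_jacobi ha hb hc⟩
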